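/- arXiv:2003.09874 — 4 statements merged into one kernel-verified Lean document; each statement's English description precedes it below -/
import Mathlib

section
/- Fix integers m ≥ n ≥ 1. For 0 ≤ p ≤ n define W^p = { λ ∈ ℤ^n : λ_1 ≥ λ_2 ≥ ··· ≥ λ_n, λ_p ≥ p - n, and λ_{p+1} ≤ p - m }, where the condition λ_p ≥ p-n is vacuous for p = 0 and λ_{p+1} ≤ p-m is vacuous for p = n. Then the sets W^0, W^1, ..., W^n form a partition of the set ℤ^n_dom of weakly decreasing integer sequences of length n if and only if m = n. -/
/-- Membership in the set `W^p` for `m × n` matrices: `λ ∈ ℤ^n` is weakly decreasing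
(antitone), `λ_i ≥ p - n` for all `1 ≤ i ≤ p` (equivalently `λ_p ≥ p - n`), and
`λ_i ≤ p - m` for all `p + 1 ≤ i ≤ n` (equivalently `λ_{p+1} ≤ p - m`).
Indices are `1`-based in the text and `0`-based here, so `λ_i` is `l ⟨i-1⟩`. -/
def memW (m n p : ℕ) (l : Fin n → ℤ) : Prop :=
  Antitone l ∧ (∀ i : Fin n, (i : ℕ) + 1 ≤ p → (p : ℤ) - n ≤ l i) ∧
    ∀ i : Fin n, p + 1 ≤ (i : ℕ) + 1 → l i ≤ (p : ℤ) - m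

/-- Uniqueness holds whenever `n ≤ m`. -/
lemma memW_uniq (m n : ℕ) (hnm : n ≤ m) (l : Fin n → ℤ) (p q : ℕ)
    (hp : p ≤ n ∧ memW m n p l) (hq : q ≤ n ∧ memW m n q l) : p = q := by
  by_contra hne
  rcases lt_or_gt_of_ne hne with hlt | hlt
  · -- p < q, use index p
    have hpn : p < n := lt_of_lt_of_le hlt hq.1
    have h1 : l ⟨p, hpn⟩ ≤ (p : ℤ) - m := hp.2.2.2 ⟨p, hpn⟩ (by simp)
    have h2 : (q : ℤ) - n ≤ l ⟨p, hpn⟩ := hq.2.2.1 ⟨p, hpn⟩ (by simpa using hlt)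
    have h3 : (q : ℤ) - n ≤ (p : ℤ) - m := h2.trans h1
    have : (n : ℤ) ≤ m := by exact_mod_cast hnm
    clear h1 h2
    omega
  · -- q < p, use index q
    have hqn : q < n := lt_of_lt_of_le hlt hp.1
    have h1 : l ⟨q, hqn⟩ ≤ (q : ℤ) - m := hq.2.2.2 ⟨q, hqn⟩ (by simp)
    have h2 : (p : ℤ) - n ≤ l ⟨q, hqn⟩ := hp.2.2.1 ⟨q, hqn⟩ (by simpa using hlt)
    have h3 : (p : ℤ) - n ≤ (q : ℤ) - m := h2.trans h1
    have : (n : ℤ) ≤ m := by exact_mod_cast hnm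
    clear h1 h2
    omega

/-- For `m ≥ n ≥ 1`, the sets `W^0, ..., W^n` partition the set of weakly decreasing
integer sequences of length `n` (i.e. every such sequence lies in exactly one `W^p`)
if and only if `m = n`. -/
theorem stmt4 (m n : ℕ) (hn : 1 ≤ n) (hnm : n ≤ m) :
    (∀ l : Fin n → ℤ, Antitone l → ∃! p : ℕ, p ≤ n ∧ memW m n p l) ↔ m = n := by
  constructor
  · intro h
    by_contra hne
    have hm : n < m := lt_of_le_of_ne hnm (Ne.symm hne)
    obtain ⟨p, ⟨hpn, _, h1, h2⟩, _⟩ :=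
      h (fun _ => (-(n : ℤ))) (fun _ _ _ => le_refl _)
    rcases Nat.eq_zero_or_pos p with hp0 | hp1
    · have h3 : (-(n : ℤ)) ≤ (p : ℤ) - m := h2 ⟨0, hn⟩ (by omega)
      omega
    · have h3 : (p : ℤ) - n ≤ -(n : ℤ) := h1 ⟨0, hn⟩ hp1
      omega
  · intro hmn l hl
    subst hmn
    classical
    have hex : ∃ k, ∀ hk : k < m, l ⟨k, hk⟩ + (m : ℤ) ≤ k :=
      ⟨m, fun hk => absurd hk (lt_irrefl m)⟩
    obtain ⟨p, hpn, hPp, hmin⟩ :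
        ∃ p, p ≤ m ∧ (∀ hk : p < m, l ⟨p, hk⟩ + (m : ℤ) ≤ p) ∧
          ∀ k, k < p → ∀ hk : k < m, ¬(l ⟨k, hk⟩ + (m : ℤ) ≤ k) := by
      refine ⟨Nat.find hex, Nat.find_le (fun hk => absurd hk (lt_irrefl m)),
        Nat.find_spec hex, ?_⟩
      intro k hk hkm hle
      exact Nat.find_min hex hk (fun _ => hle)
    have hmem : p ≤ m ∧ memW m m p l := by
      refine ⟨hpn, hl, ?_, ?_⟩
      · intro i hi
        have hip : (i : ℕ) < p := by omega
        obtain ⟨k, hk⟩ : ∃ k, p = k + 1 := ⟨p - 1, by omega⟩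
        have hj : k < m := by omega
        have h3 : (k : ℤ) < l ⟨k, hj⟩ + m := by
          by_contra hcon
          push_neg at hcon
          exact hmin k (by omega) hj hcon
        have hik : i ≤ (⟨k, hj⟩ : Fin m) := by
          rw [Fin.le_def]
          simp only [Fin.val_mk]
          omega
        have h4 : l ⟨k, hj⟩ ≤ l i := hl hik
        obtain ⟨x, hx1, hx2⟩ : ∃ x : ℤ, (k : ℤ) < x + m ∧ x ≤ l i := ⟨_, h3, h4⟩
        clear h3 h4
        omega
      · intro i hi
        have hip : p ≤ (i : ℕ) := by omega
        have hpn' : p < m := lt_of_le_of_lt hip i.isLt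
        have h3 := hPp hpn'
        have hpi : (⟨p, hpn'⟩ : Fin m) ≤ i := by
          rw [Fin.le_def]
          simp only [Fin.val_mk]
          omega
        have h4 : l i ≤ l ⟨p, hpn'⟩ := hl hpi
        obtain ⟨x, hx1, hx2⟩ : ∃ x : ℤ, x + (m : ℤ) ≤ p ∧ l i ≤ x := ⟨_, h3, h4⟩
        clear h3 h4
        omega
    exact ⟨p, hmem, fun q hq => memW_uniq m m le_rfl l q p hq hmem⟩
end

section
/- Fix integers m ≥ n ≥ 1, 0 ≤ p ≤ n-1, and d ≥ 0, and set c_p = (m-p)(n-p). Let W^p_d = { λ ∈ ℤ^n weakly decreasing : λ_p ≥ p-n, λ_{p+1} ≤ p-m, λ_{p+1}+···+λ_n = -d-c_p }. Then the minimal elements of W^p_d with respect to the componentwise partial order on ℤ^n are exactly the sequences λ^{p,μ} = ((p-n)^p, p-m-μ_{n-p}, ..., p-m-μ_1) as μ ranges over partitions with at most n-p parts and |μ| = d. -/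
/-- Membership in `W^p_d ⊆ W^p`: additionally `λ_{p+1} + ··· + λ_n = -d - c_p`
with `c_p = (m-p)(n-p)`. -/
def memWd (m n p d : ℕ) (l : Fin n → ℤ) : Prop :=
  memW m n p l ∧
    ∑ i ∈ Finset.univ.filter (fun i : Fin n => p ≤ (i : ℕ)), l i =
      -(d : ℤ) - ((m : ℤ) - p) * ((n : ℤ) - p)

/-- The sequence `λ^{p,μ} = ((p-n)^p, p-m-μ_{n-p}, ..., p-m-μ_1) ∈ ℤ^n`, for a
sequence `μ` with `n - p` entries (`μ_1 = μ 0`, ..., `μ_{n-p} = μ (n-p-1)`). -/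
def lamPMu (m n p : ℕ) (μ : Fin (n - p) → ℤ) : Fin n → ℤ := fun i =>
  if h : (i : ℕ) < p then (p : ℤ) - n
  else (p : ℤ) - m - μ ⟨n - 1 - (i : ℕ), by have := i.isLt; omega⟩

/-- `μ` is a partition with at most `k` parts of size `d`. -/
def isPartitionOfSize (k d : ℕ) (μ : Fin k → ℤ) : Prop :=
  Antitone μ ∧ (∀ i, 0 ≤ μ i) ∧ ∑ i, μ i = (d : ℤ)

lemma tail_sum {n p : ℕ} (hpn : p < n) (f : Fin n → ℤ) :
    ∑ i ∈ Finset.univ.filter (fun i : Fin n => p ≤ (i : ℕ)), f i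
      = ∑ j : Fin (n - p), f ⟨n - 1 - (j : ℕ), by omega⟩ := by
  refine Finset.sum_bij'
    (fun (i : Fin n) (hi : i ∈ Finset.univ.filter (fun i : Fin n => p ≤ (i : ℕ))) =>
      (⟨n - 1 - (i : ℕ), by simp at hi; omega⟩ : Fin (n - p)))
    (fun (j : Fin (n - p)) _ => (⟨n - 1 - (j : ℕ), by have := j.isLt; omega⟩ : Fin n))
    ?_ ?_ ?_ ?_ ?_
  · intro a ha; simp
  · intro a ha
    simp only [Finset.mem_filter, Finset.mem_univ, true_and]
    have := a.isLt; omega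
  · intro a ha
    simp only [Finset.mem_filter, Finset.mem_univ, true_and] at ha
    ext; have := a.isLt; simp; omega
  · intro a ha; ext; have := a.isLt; simp; omega
  · intro a ha
    congr 1; ext
    simp only [Finset.mem_filter, Finset.mem_univ, true_and] at ha
    have := a.isLt; simp; omega

/-- The minimal elements of `W^p_d` with respect to the componentwise order are
exactly the `λ^{p,μ}` for `μ` a partition with at most `n - p` parts and `|μ| = d`. -/
theorem stmt6 (m n p d : ℕ) (hn : 1 ≤ n) (hnm : n ≤ m) (hp : p ≤ n - 1)
    (l : Fin n → ℤ) :
    (memWd m n p d l ∧ ∀ l' : Fin n → ℤ, memWd m n p d l' → l' ≤ l → l' = l) ↔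
      ∃ μ : Fin (n - p) → ℤ, isPartitionOfSize (n - p) d μ ∧ l = lamPMu m n p μ := by

  have hpn : p < n := by omega
  have hcast : ((n - p : ℕ) : ℤ) = (n : ℤ) - p := by omega
  constructor
  · rintro ⟨⟨⟨hant, hlo, hhi⟩, hsum⟩, hmin⟩
    -- step 1: the head is constantly p - n
    have hhead : ∀ i : Fin n, (i : ℕ) < p → l i = (p : ℤ) - n := by
      set l' : Fin n → ℤ := fun i => if (i : ℕ) < p then (p : ℤ) - n else l i with hl'
      have hle : l' ≤ l := by
        intro i
        simp only [hl']
        split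
        · exact hlo i (by omega)
        · exact le_refl _
      have hmem : memWd m n p d l' := by
        refine ⟨⟨?_, ?_, ?_⟩, ?_⟩
        · intro i j hij
          have hij' : (i : ℕ) ≤ (j : ℕ) := hij
          simp only [hl']
          rcases lt_or_ge (j : ℕ) p with h1 | h1
          · rw [if_pos (by omega), if_pos (by omega)]
          · rw [if_neg (by omega)]
            rcases lt_or_ge (i : ℕ) p with h2 | h2
            · rw [if_pos h2]
              have := hhi j (by omega)
              have : (p : ℤ) - m ≤ (p : ℤ) - n := by
                have : (n : ℤ) ≤ m := by exact_mod_cast hnm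
                linarith
              have := hhi j (by omega)
              linarith [hhi j (by omega)]
            · rw [if_neg (by omega)]
              exact hant hij
        · intro i hi; simp only [hl', if_pos (show (i : ℕ) < p by omega)]; exact le_refl _
        · intro i hi; simp only [hl', if_neg (show ¬ (i : ℕ) < p by omega)]
          exact hhi i hi
        · rw [← hsum]
          apply Finset.sum_congr rfl
          intro i hi
          simp only [Finset.mem_filter, Finset.mem_univ, true_and] at hi
          simp only [hl', if_neg (show ¬ (i : ℕ) < p by omega)]
      have := hmin l' hmem hle
      intro i hi
      rw [← this]
      simp only [hl', if_pos hi]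
    -- step 2: build μ
    refine ⟨fun j => (p : ℤ) - m - l ⟨n - 1 - (j : ℕ), by have := j.isLt; omega⟩,
      ⟨?_, ?_, ?_⟩, ?_⟩
    · intro j k hjk
      have hjk' : (j : ℕ) ≤ (k : ℕ) := hjk
      have : l (⟨n - 1 - (j : ℕ), by have := j.isLt; omega⟩ : Fin n) ≤
          l ⟨n - 1 - (k : ℕ), by have := k.isLt; omega⟩ :=
        hant (by simp [Fin.le_def]; omega)
      dsimp only; linarith
    · intro j
      have := hhi ⟨n - 1 - (j : ℕ), by have := j.isLt; omega⟩ (by simp; have := j.isLt; omega)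
      dsimp only; linarith
    · rw [Finset.sum_sub_distrib, Finset.sum_const, ← tail_sum hpn l, hsum]
      simp [hcast]
      ring
    · funext i
      simp only [lamPMu]
      split
      · exact hhead i (by assumption)
      · have hi : p ≤ (i : ℕ) := by omega
        have := i.isLt
        have heq : (⟨n - 1 - (n - 1 - (i : ℕ)), by omega⟩ : Fin n) = i := by
          ext; simp; omega
        rw [heq]; ring
  · rintro ⟨μ, ⟨hμa, hμ0, hμs⟩, rfl⟩
    have hmn : (n : ℤ) ≤ (m : ℤ) := by exact_mod_cast hnm
    have hsum0 : ∑ i ∈ Finset.univ.filter (fun i : Fin n => p ≤ (i : ℕ)), lamPMu m n p μ i =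
        -(d : ℤ) - ((m : ℤ) - p) * ((n : ℤ) - p) := by
      rw [tail_sum hpn]
      have : ∀ j : Fin (n - p),
          lamPMu m n p μ ⟨n - 1 - (j : ℕ), by have := j.isLt; omega⟩ = (p : ℤ) - m - μ j := by
        intro j
        have hj := j.isLt
        simp only [lamPMu]
        rw [dif_neg (by simp; omega)]
        congr 2
        ext; simp; omega
      rw [Finset.sum_congr rfl (fun j _ => this j), Finset.sum_sub_distrib, hμs,
        Finset.sum_const]
      simp [hcast]
      ring
    have hmemW : memW m n p (lamPMu m n p μ) := by
      refine ⟨?_, ?_, ?_⟩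
      · intro i j hij
        have hij' : (i : ℕ) ≤ (j : ℕ) := hij
        simp only [lamPMu]
        rcases lt_or_ge (j : ℕ) p with h1 | h1
        · rw [dif_pos (by omega), dif_pos (by omega)]
        · rw [dif_neg (by omega)]
          rcases lt_or_ge (i : ℕ) p with h2 | h2
          · rw [dif_pos h2]
            have := hμ0 ⟨n - 1 - (j : ℕ), by have := j.isLt; omega⟩
            linarith
          · rw [dif_neg (by omega)]
            have : μ (⟨n - 1 - (i : ℕ), by have := i.isLt; omega⟩ : Fin (n - p)) ≤
                μ ⟨n - 1 - (j : ℕ), by have := j.isLt; omega⟩ :=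
              hμa (by simp [Fin.le_def]; omega)
            linarith
      · intro i hi; simp only [lamPMu, dif_pos (show (i : ℕ) < p by omega)]; exact le_refl _
      · intro i hi; simp only [lamPMu, dif_neg (show ¬ (i : ℕ) < p by omega)]
        have := hμ0 ⟨n - 1 - (i : ℕ), by have := i.isLt; omega⟩
        linarith
    refine ⟨⟨hmemW, hsum0⟩, ?_⟩
    rintro l' ⟨⟨hant', hlo', hhi'⟩, hsum'⟩ hle
    have htail : ∀ i ∈ Finset.univ.filter (fun i : Fin n => p ≤ (i : ℕ)),
        l' i = lamPMu m n p μ i := by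
      rw [← Finset.sum_eq_sum_iff_of_le (fun i _ => hle i)]
      rw [hsum', hsum0]
    funext i
    rcases lt_or_ge (i : ℕ) p with h | h
    · have h1 := hlo' i (by omega)
      have h2 := hle i
      have h3 : lamPMu m n p μ i = (p : ℤ) - n := by simp [lamPMu, dif_pos h]
      rw [h3] at h2 ⊢
      linarith
    · exact htail i (by simp [h])
end

section
/- Fix integers m ≥ n ≥ 1, 0 ≤ p ≤ n-1, d ≥ 0, and c_p = (m-p)(n-p). Every λ in W^p_d = { λ ∈ ℤ^n weakly decreasing : λ_p ≥ p-n, λ_{p+1} ≤ p-m, λ_{p+1}+···+λ_n = -d-c_p } can be written as λ = λ^{p,μ} + γ where μ is a partition with at most n-p parts and |μ| = d, γ is a partition with at most p parts (viewed in ℤ^n with trailing zeros), and λ^{p,μ} = ((p-n)^p, p-m-μ_{n-p}, ..., p-m-μ_1). -/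
/-- Every `λ ∈ W^p_d` can be written as `λ = λ^{p,μ} + γ` where `μ` is a partition
with at most `n - p` parts and `|μ| = d`, and `γ` is a partition with at most `p`
parts, viewed in `ℤ^n` with trailing zeros. -/
theorem stmt7 (m n p d : ℕ) (hn : 1 ≤ n) (hnm : n ≤ m) (hp : p ≤ n - 1)
    (l : Fin n → ℤ) (hl : memWd m n p d l) :
    ∃ (μ : Fin (n - p) → ℤ) (γ : Fin n → ℤ),
      isPartitionOfSize (n - p) d μ ∧
      Antitone γ ∧ (∀ i, 0 ≤ γ i) ∧ (∀ i : Fin n, p ≤ (i : ℕ) → γ i = 0) ∧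
      l = lamPMu m n p μ + γ := by
  obtain ⟨⟨hanti, hlow, hhigh⟩, hsum⟩ := hl
  refine ⟨fun j => (p : ℤ) - m - l ⟨n - 1 - (j : ℕ), by have := j.isLt; omega⟩,
    fun i => if (i : ℕ) < p then l i - ((p : ℤ) - n) else 0, ⟨?_, ?_, ?_⟩, ?_, ?_, ?_, ?_⟩
  · intro j j' hjj'
    have h1 : (⟨n - 1 - (j' : ℕ), by have := j'.isLt; omega⟩ : Fin n) ≤
        ⟨n - 1 - (j : ℕ), by have := j.isLt; omega⟩ := by
      simp only [Fin.mk_le_mk]; omega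
    have := hanti h1
    dsimp only
    omega
  · intro j
    have := hhigh ⟨n - 1 - (j : ℕ), by have := j.isLt; omega⟩ (by simp; omega)
    dsimp only
    omega
  · have key : ∑ j : Fin (n - p), l ⟨n - 1 - (j : ℕ), by have := j.isLt; omega⟩ =
        ∑ i ∈ Finset.univ.filter (fun i : Fin n => p ≤ (i : ℕ)), l i := by
      refine Finset.sum_nbij' (fun j => ⟨n - 1 - (j : ℕ), by have := j.isLt; omega⟩)
        (fun i => ⟨(n - 1 - (i : ℕ)) % (n - p), Nat.mod_lt _ (by omega)⟩) ?_ ?_ ?_ ?_ ?_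
      · intro j _; simp; omega
      · intro i hi; simp
      · intro j _
        have hj := j.isLt
        ext; simp [Nat.mod_eq_of_lt (show n - 1 - (n - 1 - (j : ℕ)) < n - p by omega)]
        omega
      · intro i hi
        simp only [Finset.mem_filter] at hi
        have hi2 := i.isLt
        ext
        simp [Nat.mod_eq_of_lt (show n - 1 - (i : ℕ) < n - p by omega)]
        omega
      · intro j _; rfl
    rw [Finset.sum_sub_distrib, key, hsum, Finset.sum_const, Finset.card_univ,
      Fintype.card_fin, nsmul_eq_mul]
    have hnp : ((n - p : ℕ) : ℤ) = (n : ℤ) - p := by omega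
    rw [hnp]; ring
  · intro i j hij
    by_cases hi : (i : ℕ) < p <;> by_cases hj : (j : ℕ) < p <;> simp [hi, hj]
    · have := hanti hij; omega
    · have := hlow i (by omega); omega
    · exfalso; exact hi (lt_of_le_of_lt (by exact_mod_cast hij) hj)
  · intro i
    by_cases hi : (i : ℕ) < p <;> simp [hi]
    have := hlow i (by omega); omega
  · intro i hi; simp [Nat.not_lt.mpr hi]
  · funext i
    simp only [Pi.add_apply, lamPMu]
    by_cases hi : (i : ℕ) < p
    · simp [hi]
    · have hEq : (⟨n - 1 - (n - 1 - (i : ℕ)), by have := i.isLt; omega⟩ : Fin n) = i := by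
        ext
        show n - 1 - (n - 1 - (i : ℕ)) = (i : ℕ)
        have := i.isLt; omega
      rw [dif_neg hi, if_neg hi, hEq]
      ring
end

section
/- Fix n ≥ 1, k ∈ ℤ, and 0 ≤ p ≤ n. For every λ ∈ U_k^p = { λ ∈ ℤ^n weakly decreasing : λ_p ≥ p-n ≥ λ_{p+1}, λ_{p+1}+···+λ_n ≥ -binom(n-p+1,2) - k } and every 0 ≤ s ≤ n-1, one has λ_{s+1}+···+λ_n ≥ -binom(n-s+1, 2) - k. -/
/-- Membership in `U_k^p` (square-matrix case `m = n`): `λ ∈ ℤ^n` is weakly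
decreasing, `λ_p ≥ p - n ≥ λ_{p+1}` (encoded, equivalently under antitonicity,
for all `1`-based indices `i ≤ p` resp. `i ≥ p + 1`), and
`λ_{p+1} + ··· + λ_n ≥ -binom(n-p+1, 2) - k`. -/
def memU (n : ℕ) (k : ℤ) (p : ℕ) (l : Fin n → ℤ) : Prop :=
  Antitone l ∧ (∀ i : Fin n, (i : ℕ) + 1 ≤ p → (p : ℤ) - n ≤ l i) ∧
    (∀ i : Fin n, p + 1 ≤ (i : ℕ) + 1 → l i ≤ (p : ℤ) - n) ∧
    -((n - p + 1).choose 2 : ℤ) - k ≤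
      ∑ i ∈ Finset.univ.filter (fun i : Fin n => p ≤ (i : ℕ)), l i

/-- For `λ ∈ U_k^p` and every `0 ≤ s ≤ n - 1`, one has
`λ_{s+1} + ··· + λ_n ≥ -binom(n-s+1, 2) - k`. -/
theorem stmt9 (n : ℕ) (hn : 1 ≤ n) (k : ℤ) (p : ℕ) (hp : p ≤ n)
    (l : Fin n → ℤ) (hl : memU n k p l) (s : ℕ) (hs : s ≤ n - 1) :
    -((n - s + 1).choose 2 : ℤ) - k ≤
      ∑ i ∈ Finset.univ.filter (fun i : Fin n => s ≤ (i : ℕ)), l i := by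
  obtain ⟨hanti, hge, hle, hsum⟩ := hl
  -- peeling one term off the tail sum
  have hstep : ∀ t (ht : t < n),
      (∑ i ∈ Finset.univ.filter (fun i : Fin n => t ≤ (i : ℕ)), l i)
      = l ⟨t, ht⟩ + ∑ i ∈ Finset.univ.filter (fun i : Fin n => t + 1 ≤ (i : ℕ)), l i := by
    intro t ht
    have hset : Finset.univ.filter (fun i : Fin n => t ≤ (i : ℕ))
        = insert ⟨t, ht⟩ (Finset.univ.filter (fun i : Fin n => t + 1 ≤ (i : ℕ))) := by
      ext i
      simp only [Finset.mem_filter, Finset.mem_univ, true_and, Finset.mem_insert, Fin.ext_iff]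
      omega
    rw [hset, Finset.sum_insert (by simp)]
  have hchoose : ∀ t, t < n →
      ((n - t + 1).choose 2 : ℤ) = (n - t : ℕ) + ((n - (t + 1) + 1).choose 2 : ℤ) := by
    intro t ht
    have h1 : n - (t + 1) + 1 = n - t := by omega
    rw [h1]
    have h2 : (n - t + 1).choose 2 = (n - t).choose 1 + (n - t).choose 2 :=
      Nat.choose_succ_succ (n - t) 1
    rw [h2, Nat.choose_one_right]
    push_cast
    ring
  -- downward induction: case s ≤ p
  have main_le : ∀ d s', s' + d = p →
      -((n - s' + 1).choose 2 : ℤ) - k ≤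
        ∑ i ∈ Finset.univ.filter (fun i : Fin n => s' ≤ (i : ℕ)), l i := by
    intro d
    induction d with
    | zero => intro s' h; subst h; simpa using hsum
    | succ d ih =>
      intro s' h
      have ht : s' < n := by omega
      have hIH := ih (s' + 1) (by omega)
      have hl1 : (p : ℤ) - n ≤ l ⟨s', ht⟩ := hge ⟨s', ht⟩ (by simp; omega)
      rw [hstep s' ht, hchoose s' ht]
      have hcast : -((n - s' : ℕ) : ℤ) ≤ (p : ℤ) - n := by omega
      linarith
  -- upward induction: case p ≤ s
  have main_ge : ∀ d, p + d ≤ n →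
      -((n - (p + d) + 1).choose 2 : ℤ) - k ≤
        ∑ i ∈ Finset.univ.filter (fun i : Fin n => p + d ≤ (i : ℕ)), l i := by
    intro d
    induction d with
    | zero => intro _; simpa using hsum
    | succ d ih =>
      intro h
      have ht : p + d < n := by omega
      have hIH := ih (by omega)
      have hl1 : l ⟨p + d, ht⟩ ≤ (p : ℤ) - n := hle ⟨p + d, ht⟩ (by simp)
      have hpeel := hstep (p + d) ht
      rw [hchoose (p + d) ht] at hIH
      have hcast : ((n - (p + d) : ℕ) : ℤ) ≤ (n : ℤ) - p := by omega
      have hfin : p + (d + 1) = (p + d) + 1 := by ring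
      rw [hfin]
      linarith
  rcases le_or_gt s p with h | h
  · exact main_le (p - s) s (by omega)
  · have := main_ge (s - p) (by omega)
    have hsp : p + (s - p) = s := by omega
    rwa [hsp] at this
end
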